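/- arXiv:2404.01303 — 10 statements merged into one kernel-verified Lean document; each statement's English description precedes it below -/
import Mathlib

section
/- Let λ be a real number with 1/2 ≤ λ ≤ 1, and let a2, a3 be complex numbers with |a3 - a2^2| ≤ λ and |a2| ≤ 1 + λ. Then |a3 - (1/2)a2^2| ≥ |a2| - √(2λ). -/
theorem stmt_1 (lam : ℝ) (hlam : 1 / 2 ≤ lam) (hlam1 : lam ≤ 1)
    (a2 a3 : ℂ) (h1 : ‖a3 - a2 ^ 2‖ ≤ lam)
    (h2 : ‖a2‖ ≤ 1 + lam) :
    ‖a3 - (1 / 2) * a2 ^ 2‖ ≥ ‖a2‖ - Real.sqrt (2 * lam) := by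
  set t := ‖a2‖ with ht
  set s := Real.sqrt (2 * lam) with hs
  have hs2 : s ^ 2 = 2 * lam := Real.sq_sqrt (by linarith)
  have hs1 : 1 ≤ s := by
    nlinarith [Real.sqrt_nonneg (2 * lam)]
  by_cases hc : t ≤ s
  · have := norm_nonneg (a3 - (1 / 2) * a2 ^ 2)
    linarith
  · push_neg at hc
    have key : t ^ 2 / 2 ≤ ‖a3 - (1 / 2) * a2 ^ 2‖ + lam := by
      have : ‖(1 : ℂ)/2 * a2 ^ 2‖ ≤
          ‖a3 - (1 / 2) * a2 ^ 2‖ + ‖a3 - a2 ^ 2‖ := by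
        calc ‖(1 : ℂ)/2 * a2 ^ 2‖
            = ‖(a3 - (1/2) * a2 ^ 2) - (a3 - a2 ^ 2)‖ := by ring_nf
          _ ≤ _ := norm_sub_le _ _
      have habs : ‖(1 : ℂ)/2 * a2 ^ 2‖ = t ^ 2 / 2 := by
        simp [map_mul, map_pow, ← ht]
        ring
      linarith [habs ▸ this]
    nlinarith [norm_nonneg (a3 - (1 / 2) * a2 ^ 2)]
end

section
/- For λ with 1/2 ≤ λ ≤ 1, the function f₄(z) = z/(1 - √(2λ) z + λz²) has second and third Taylor coefficients a₂ = √(2λ) and a₃ = λ, and its logarithmic coefficients satisfy |γ₂| - |γ₁| = -√(2λ)/2. -/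
/-!
Since `1 / (1 - a z + l z²) = 1 + a z + (a² - l) z² + …`, the function `z / (1 - a z + l z²)` has
`a₂ = a` and `a₃ = a² - l`. For `a = √(2λ)`, `l = λ` this gives `a₃ = λ = a₂² / 2`, so `γ₂ = 0`
and `|γ₂| - |γ₁| = -a₂ / 2`.
-/

open Filter Topology

section DivQuadratic

variable (a l : ℂ)

lemma hasDerivAt_quadratic (z : ℂ) :
    HasDerivAt (fun z : ℂ => 1 - a * z + l * z ^ 2) (-a + 2 * l * z) z := by
  refine (((hasDerivAt_const z (1 : ℂ)).sub ((hasDerivAt_id z).const_mul a)).add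
    ((hasDerivAt_pow 2 z).const_mul l)).congr_deriv ?_
  push_cast
  ring

variable {a l}

lemma hasDerivAt_div_quadratic {z : ℂ} (hz : 1 - a * z + l * z ^ 2 ≠ 0) :
    HasDerivAt (fun z : ℂ => z / (1 - a * z + l * z ^ 2))
      ((1 - l * z ^ 2) / (1 - a * z + l * z ^ 2) ^ 2) z := by
  refine ((hasDerivAt_id z).div (hasDerivAt_quadratic a l z) hz).congr_deriv ?_
  simp only [id_eq]
  ring

lemma hasDerivAt_div_quadratic_deriv {z : ℂ} (hz : 1 - a * z + l * z ^ 2 ≠ 0) :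
    HasDerivAt (fun z : ℂ => (1 - l * z ^ 2) / (1 - a * z + l * z ^ 2) ^ 2)
      ((2 * a - 6 * l * z + 2 * l ^ 2 * z ^ 3) / (1 - a * z + l * z ^ 2) ^ 3) z := by
  have hnum : HasDerivAt (fun z : ℂ => 1 - l * z ^ 2) (-(2 * l * z)) z := by
    refine ((hasDerivAt_const z (1 : ℂ)).sub ((hasDerivAt_pow 2 z).const_mul l)).congr_deriv ?_
    push_cast
    ring
  refine (hnum.div ((hasDerivAt_quadratic a l z).pow 2) (pow_ne_zero 2 hz)).congr_deriv ?_
  rw [Pi.pow_apply, div_eq_div_iff (pow_ne_zero 2 (pow_ne_zero 2 hz)) (pow_ne_zero 3 hz)]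
  push_cast
  ring

variable (a l)

lemma hasDerivAt_div_quadratic_deriv_deriv_zero :
    HasDerivAt (fun z : ℂ => (2 * a - 6 * l * z + 2 * l ^ 2 * z ^ 3) / (1 - a * z + l * z ^ 2) ^ 3)
      (6 * (a ^ 2 - l)) 0 := by
  have hnum : HasDerivAt (fun z : ℂ => 2 * a - 6 * l * z + 2 * l ^ 2 * z ^ 3) (-(6 * l)) 0 := by
    refine (((hasDerivAt_const 0 (2 * a)).sub ((hasDerivAt_id 0).const_mul (6 * l))).add
      ((hasDerivAt_pow 3 0).const_mul (2 * l ^ 2))).congr_deriv ?_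
    simp
  refine (hnum.div ((hasDerivAt_quadratic a l 0).pow 3) (by simp)).congr_deriv ?_
  rw [Pi.pow_apply]
  push_cast
  ring

lemma eventually_quadratic_ne_zero : ∀ᶠ z in 𝓝 (0 : ℂ), 1 - a * z + l * z ^ 2 ≠ 0 :=
  (hasDerivAt_quadratic a l 0).continuousAt.eventually_ne (by simp)

lemma deriv_div_quadratic_eventuallyEq :
    deriv (fun z : ℂ => z / (1 - a * z + l * z ^ 2)) =ᶠ[𝓝 0]
      fun z => (1 - l * z ^ 2) / (1 - a * z + l * z ^ 2) ^ 2 :=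
  (eventually_quadratic_ne_zero a l).mono fun _ hz => (hasDerivAt_div_quadratic hz).deriv

lemma deriv_deriv_div_quadratic_eventuallyEq :
    deriv (deriv fun z : ℂ => z / (1 - a * z + l * z ^ 2)) =ᶠ[𝓝 0]
      fun z => (2 * a - 6 * l * z + 2 * l ^ 2 * z ^ 3) / (1 - a * z + l * z ^ 2) ^ 3 := by
  filter_upwards [(eventually_quadratic_ne_zero a l).eventually_nhds] with z hz
  rw [EventuallyEq.deriv_eq (hz.mono fun _ hw => (hasDerivAt_div_quadratic hw).deriv)]
  exact (hasDerivAt_div_quadratic_deriv hz.self_of_nhds).deriv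

theorem iteratedDeriv_two_div_quadratic :
    iteratedDeriv 2 (fun z : ℂ => z / (1 - a * z + l * z ^ 2)) 0 = 2 * a := by
  rw [iteratedDeriv_succ, iteratedDeriv_one, (deriv_div_quadratic_eventuallyEq a l).deriv_eq,
    (hasDerivAt_div_quadratic_deriv (by simp)).deriv]
  simp

theorem iteratedDeriv_three_div_quadratic :
    iteratedDeriv 3 (fun z : ℂ => z / (1 - a * z + l * z ^ 2)) 0 = 6 * (a ^ 2 - l) := by
  rw [iteratedDeriv_succ, iteratedDeriv_succ, iteratedDeriv_one,
    (deriv_deriv_div_quadratic_eventuallyEq a l).deriv_eq,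
    (hasDerivAt_div_quadratic_deriv_deriv_zero a l).deriv]

end DivQuadratic

theorem stmt_5_general (lam : ℝ) (hlam : 1 / 2 ≤ lam) :
    (iteratedDeriv 2 (fun z : ℂ =>
        z / (1 - (Real.sqrt (2 * lam) : ℂ) * z + (lam : ℂ) * z ^ 2)) 0) / 2
      = (Real.sqrt (2 * lam) : ℂ) ∧
    (iteratedDeriv 3 (fun z : ℂ =>
        z / (1 - (Real.sqrt (2 * lam) : ℂ) * z + (lam : ℂ) * z ^ 2)) 0) / 6
      = (lam : ℂ) ∧
    (let a2 : ℂ := (Real.sqrt (2 * lam) : ℂ)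
     let a3 : ℂ := (lam : ℂ)
     let γ1 : ℂ := a2 / 2
     let γ2 : ℂ := (1 / 2) * (a3 - (1 / 2) * a2 ^ 2)
     ‖γ2‖ - ‖γ1‖ = -Real.sqrt (2 * lam) / 2) := by
  have hsq : (Real.sqrt (2 * lam) : ℂ) ^ 2 = 2 * lam := by
    norm_cast
    exact Real.sq_sqrt (by linarith)
  refine ⟨by rw [iteratedDeriv_two_div_quadratic]; ring,
    by rw [iteratedDeriv_three_div_quadratic, hsq]; ring, ?_⟩
  have hγ2 : (1 / 2 : ℂ) * (lam - 1 / 2 * (Real.sqrt (2 * lam) : ℂ) ^ 2) = 0 := by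
    rw [hsq]; ring
  simp only [hγ2, norm_zero, norm_div, Complex.norm_real, Real.norm_of_nonneg (Real.sqrt_nonneg _),
    Complex.norm_ofNat]
  ring

theorem stmt_5 (lam : ℝ) (hlam : 1 / 2 ≤ lam) (hlam1 : lam ≤ 1) :
    (iteratedDeriv 2 (fun z : ℂ =>
        z / (1 - (Real.sqrt (2 * lam) : ℂ) * z + (lam : ℂ) * z ^ 2)) 0) / 2
      = (Real.sqrt (2 * lam) : ℂ) ∧
    (iteratedDeriv 3 (fun z : ℂ =>
        z / (1 - (Real.sqrt (2 * lam) : ℂ) * z + (lam : ℂ) * z ^ 2)) 0) / 6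
      = (lam : ℂ) ∧
    (let a2 : ℂ := (Real.sqrt (2 * lam) : ℂ)
     let a3 : ℂ := (lam : ℂ)
     let γ1 : ℂ := a2 / 2
     let γ2 : ℂ := (1 / 2) * (a3 - (1 / 2) * a2 ^ 2)
     ‖γ2‖ - ‖γ1‖ = -Real.sqrt (2 * lam) / 2) :=
  stmt_5_general lam hlam
end

section
/- Let α ≥ 0 and let a2, a3 be complex numbers satisfying |a2| ≤ 2/(1+α) and |a3 - ((α² + 8α + 3)/(4(1+2α))) a2²| ≤ 1/(1+2α) - ((1+α)²/(4(1+2α)))|a2|². Then (1/2)|a3 - (1/2)a2²| - (1/2)|a2| ≤ 1/(2(1+2α)). -/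
theorem stmt_6 (α : ℝ) (hα : 0 ≤ α) (a2 a3 : ℂ)
    (h1 : ‖a2‖ ≤ 2 / (1 + α))
    (h2 : ‖a3 - (((α ^ 2 + 8 * α + 3) / (4 * (1 + 2 * α))) : ℂ) * a2 ^ 2‖
      ≤ 1 / (1 + 2 * α) - ((1 + α) ^ 2 / (4 * (1 + 2 * α))) * ‖a2‖ ^ 2) :
    (1 / 2) * ‖a3 - (1 / 2) * a2 ^ 2‖ - (1 / 2) * ‖a2‖
      ≤ 1 / (2 * (1 + 2 * α)) := by
  set t := ‖a2‖ with ht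
  have ht0 : 0 ≤ t := norm_nonneg a2
  have hpos : (0:ℝ) < 1 + 2*α := by linarith
  have hpos1 : (0:ℝ) < 1 + α := by linarith
  have ht2 : t * (1 + α) ≤ 2 := (le_div_iff₀ hpos1).1 h1
  have hne : (1 + 2*(α:ℂ)) ≠ 0 := by
    intro h
    have := congrArg Complex.re h
    simp at this
    linarith
  have hsplit : a3 - (1/2)*a2^2 =
      (a3 - (((α ^ 2 + 8 * α + 3) / (4 * (1 + 2 * α))) : ℂ) * a2 ^ 2)
        + (((α^2+4*α+1)/(4*(1+2*α)) : ℝ) : ℂ) * a2^2 := by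
    push_cast
    field_simp
    ring
  have hcoef : (0:ℝ) ≤ (α^2+4*α+1)/(4*(1+2*α)) := by positivity
  have key : ‖a3 - (1/2)*a2^2‖
      ≤ ‖a3 - (((α ^ 2 + 8 * α + 3) / (4 * (1 + 2 * α))) : ℂ) * a2 ^ 2‖
        + ((α^2+4*α+1)/(4*(1+2*α))) * t^2 := by
    rw [hsplit]
    refine (norm_add_le _ _).trans ?_
    gcongr
    rw [norm_mul, norm_pow, Complex.norm_of_nonneg hcoef]
  have h4 : ((α^2+4*α+1)/(4*(1+2*α)))*t^2
      = ((1+α)^2/(4*(1+2*α)))*t^2 + (α/(2*(1+2*α)))*t^2 := by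
    field_simp
    ring
  have hA : ‖a3 - (1/2)*a2^2‖
      ≤ 1/(1+2*α) + (α/(2*(1+2*α)))*t^2 := by linarith
  have h5 : (α/(2*(1+2*α)))*t^2 ≤ t := by
    rw [div_mul_eq_mul_div, div_le_iff₀ (by positivity)]
    nlinarith [mul_le_mul_of_nonneg_left ht2 ht0, mul_nonneg (mul_nonneg hα ht0) ht0,
      mul_nonneg ht0 ht0]
  have h6 : 1/(2*(1+2*α)) = (1/2) * (1/(1+2*α)) := by field_simp
  rw [h6]
  linarith
end

section
/- Let 0 ≤ α ≤ (1+√3)/2 and let a2, a3 be complex numbers with |a2| ≤ 2/(1+α) and |a3 - ((α²+8α+3)/(4(1+2α)))a2²| ≤ 1/(1+2α) - ((1+α)²/(4(1+2α)))|a2|². Then (1/2)|a3 - (1/2)a2²| - (1/2)|a2| ≥ -1/√(2(α²+3α+1)). -/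
theorem stmt_7 (α : ℝ) (hα : 0 ≤ α) (hα2 : α ≤ (1 + Real.sqrt 3) / 2) (a2 a3 : ℂ)
    (h1 : ‖a2‖ ≤ 2 / (1 + α))
    (h2 : ‖a3 - (((α ^ 2 + 8 * α + 3) / (4 * (1 + 2 * α))) : ℂ) * a2 ^ 2‖
      ≤ 1 / (1 + 2 * α) - ((1 + α) ^ 2 / (4 * (1 + 2 * α))) * ‖a2‖ ^ 2) :
    (1 / 2) * ‖a3 - (1 / 2) * a2 ^ 2‖ - (1 / 2) * ‖a2‖
      ≥ -(1 / Real.sqrt (2 * (α ^ 2 + 3 * α + 1))) := by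
  set x := ‖a2‖ with hxdef
  set t := ‖a3 - (1 / 2) * a2 ^ 2‖ with htdef
  have hx0 : 0 ≤ x := norm_nonneg _
  have ht0 : 0 ≤ t := norm_nonneg _
  have hα1 : (0:ℝ) < 1 + 2 * α := by linarith
  have hβ : (0:ℝ) < α ^ 2 + 3 * α + 1 := by nlinarith
  set s := Real.sqrt (2 * (α ^ 2 + 3 * α + 1)) with hsdef
  have hs0 : 0 < s := Real.sqrt_pos.mpr (by linarith)
  have hs2 : s ^ 2 = 2 * (α ^ 2 + 3 * α + 1) := Real.sq_sqrt (by linarith)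
  -- s ≥ 1 + 2α
  have h31 : (1:ℝ) ≤ Real.sqrt 3 := by
    rw [show (1:ℝ) = Real.sqrt 1 by simp]
    exact Real.sqrt_le_sqrt (by norm_num)
  have hquad : 0 ≤ -2 * α ^ 2 + 2 * α + 1 := by
    have h3sq : (Real.sqrt 3) ^ 2 = 3 := Real.sq_sqrt (by norm_num)
    have hA : 0 ≤ Real.sqrt 3 - (2 * α - 1) := by linarith
    have hB : 0 ≤ Real.sqrt 3 + (2 * α - 1) := by linarith
    nlinarith [mul_nonneg hA hB]
  have hsge : 1 + 2 * α ≤ s := by nlinarith [hs0, hs2]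
  -- complex coefficient computation
  have hc : (((α ^ 2 + 8 * α + 3) / (4 * (1 + 2 * α))) : ℂ) - 1 / 2
      = (((α ^ 2 + 4 * α + 1) / (4 * (1 + 2 * α)) : ℝ) : ℂ) := by
    have h2c : ((1:ℂ) + 2 * (α:ℂ)) ≠ 0 := by
      have : ((1 + 2 * α : ℝ) : ℂ) ≠ 0 := Complex.ofReal_ne_zero.mpr hα1.ne'
      push_cast at this
      exact this
    push_cast
    have h4c : (4:ℂ) * (1 + 2 * (α:ℂ)) ≠ 0 := mul_ne_zero (by norm_num) h2c
    rw [eq_div_iff h4c, sub_mul, div_mul_cancel₀ _ h4c]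
    ring
  have hd0 : 0 ≤ (α ^ 2 + 4 * α + 1) / (4 * (1 + 2 * α)) := by positivity
  -- reverse triangle inequality
  have e1 : ((((α ^ 2 + 8 * α + 3) / (4 * (1 + 2 * α))) : ℂ) - 1 / 2) * a2 ^ 2
        - ((((α ^ 2 + 8 * α + 3) / (4 * (1 + 2 * α))) : ℂ) * a2 ^ 2 - a3)
      = a3 - (1 / 2) * a2 ^ 2 := by ring
  have habsu : ‖((((α ^ 2 + 8 * α + 3) / (4 * (1 + 2 * α))) : ℂ) - 1 / 2) * a2 ^ 2‖
      = (α ^ 2 + 4 * α + 1) / (4 * (1 + 2 * α)) * x ^ 2 := by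
    rw [hc, norm_mul, norm_pow, Complex.norm_real, Real.norm_eq_abs, abs_of_nonneg hd0]
  have habsv : ‖(((α ^ 2 + 8 * α + 3) / (4 * (1 + 2 * α))) : ℂ) * a2 ^ 2 - a3‖
      = ‖a3 - (((α ^ 2 + 8 * α + 3) / (4 * (1 + 2 * α))) : ℂ) * a2 ^ 2‖ :=
    norm_sub_rev _ _
  have h4 : (α ^ 2 + 4 * α + 1) / (4 * (1 + 2 * α)) * x ^ 2
      - ‖a3 - (((α ^ 2 + 8 * α + 3) / (4 * (1 + 2 * α))) : ℂ) * a2 ^ 2‖ ≤ t := by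
    have := norm_sub_norm_le
      (((((α ^ 2 + 8 * α + 3) / (4 * (1 + 2 * α))) : ℂ) - 1 / 2) * a2 ^ 2)
      ((((α ^ 2 + 8 * α + 3) / (4 * (1 + 2 * α))) : ℂ) * a2 ^ 2 - a3)
    rw [e1] at this
    rw [habsu, habsv] at this
    exact this
  have htri : (α ^ 2 + 4 * α + 1) / (4 * (1 + 2 * α)) * x ^ 2
      - (1 / (1 + 2 * α) - (1 + α) ^ 2 / (4 * (1 + 2 * α)) * x ^ 2) ≤ t := by
    linarith [h2, h4]
  -- clear denominators
  have heq : (α ^ 2 + 4 * α + 1) / (4 * (1 + 2 * α)) * x ^ 2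
      - (1 / (1 + 2 * α) - (1 + α) ^ 2 / (4 * (1 + 2 * α)) * x ^ 2)
      = ((α ^ 2 + 3 * α + 1) * x ^ 2 - 2) / (2 * (1 + 2 * α)) := by
    field_simp
    ring
  have key : (α ^ 2 + 3 * α + 1) * x ^ 2 - 2 ≤ 2 * (1 + 2 * α) * t := by
    rw [heq] at htri
    have := (div_le_iff₀ (by positivity : (0:ℝ) < 2 * (1 + 2 * α))).mp htri
    linarith [this]
  have hkey : s ^ 2 * x ^ 2 - 4 ≤ 4 * (1 + 2 * α) * t := by
    have hs2x : s ^ 2 * x ^ 2 = 2 * ((α ^ 2 + 3 * α + 1) * x ^ 2) := by rw [hs2]; ring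
    linarith [key, hs2x.le, hs2x.ge]
  clear h2 htri h4 habsu habsv e1 hc key heq h1 hd0
  clear_value x t s
  clear htdef hxdef hsdef a2 a3
  -- case split
  by_cases hcase : s * x ≤ 2
  · have hx2 : x / 2 ≤ 1 / s := by
      rw [div_le_div_iff₀ (by norm_num) hs0]
      linarith
    linarith
  · push_neg at hcase
    have hB : 0 ≤ s * (s * x + 2) - 4 * (1 + 2 * α) := by
      have h42 : s * 4 ≤ s * (s * x + 2) := mul_le_mul_of_nonneg_left (by linarith) hs0.le
      linarith
    have hfact : 0 ≤ (s * x - 2) * (s * (s * x + 2) - 4 * (1 + 2 * α)) :=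
      mul_nonneg (by linarith) hB
    have hskey : s * (s ^ 2 * x ^ 2 - 4) ≤ s * (4 * (1 + 2 * α) * t) :=
      mul_le_mul_of_nonneg_left hkey hs0.le
    have h5' : 0 ≤ 4 * (1 + 2 * α) * (s * t - s * x + 2) := by nlinarith [hfact, hskey]
    have h5 : s * x - 2 ≤ s * t := by
      by_contra h
      push_neg at h
      have : 4 * (1 + 2 * α) * (s * t - s * x + 2) < 0 :=
        mul_neg_of_pos_of_neg (by linarith) (by linarith)
      linarith
    have h6 : x - t ≤ 2 / s := by
      rw [le_div_iff₀ hs0]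
      nlinarith [h5]
    have h7 : 2 / s = 2 * (1 / s) := by ring
    linarith
end

section
/- Let α ≥ (1+√3)/2 and let a2, a3 be complex numbers with |a2| ≤ 2/(1+α) and |a3 - ((α²+8α+3)/(4(1+2α)))a2²| ≤ 1/(1+2α) - ((1+α)²/(4(1+2α)))|a2|². Then (1/2)|a3 - (1/2)a2²| - (1/2)|a2| ≥ -(6α² + 10α + 3)/(4(2α+1)(α²+3α+1)). -/
theorem stmt_8 (α : ℝ) (hα : (1 + Real.sqrt 3) / 2 ≤ α) (a2 a3 : ℂ)
    (h1 : ‖a2‖ ≤ 2 / (1 + α))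
    (h2 : ‖(a3 - (((α ^ 2 + 8 * α + 3) / (4 * (1 + 2 * α))) : ℂ) * a2 ^ 2)‖
      ≤ 1 / (1 + 2 * α) - ((1 + α) ^ 2 / (4 * (1 + 2 * α))) * ‖a2‖ ^ 2) :
    (1 / 2) * ‖(a3 - (1 / 2) * a2 ^ 2)‖ - (1 / 2) * ‖a2‖
      ≥ -((6 * α ^ 2 + 10 * α + 3) / (4 * (2 * α + 1) * (α ^ 2 + 3 * α + 1))) := by
  have hs : (1:ℝ) ≤ Real.sqrt 3 := by
    rw [show (1:ℝ) = Real.sqrt 1 by simp]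
    exact Real.sqrt_le_sqrt (by norm_num)
  have hα1 : (1:ℝ) ≤ α := by nlinarith
  set t := ‖a2‖ with ht
  have ht0 : 0 ≤ t := norm_nonneg a2
  have hd : (0:ℝ) < 1 + 2 * α := by linarith
  have hdc : ((1 + 2 * α : ℝ) : ℂ) ≠ 0 := by
    exact_mod_cast ne_of_gt hd
  have hdc' : (1 + 2 * (α:ℂ)) ≠ 0 := by push_cast at hdc ⊢; exact hdc
  have heq : a3 - (1/2 : ℂ) * a2 ^ 2 =
      (a3 - (((α ^ 2 + 8 * α + 3) / (4 * (1 + 2 * α))) : ℂ) * a2 ^ 2)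
      + ((((α ^ 2 + 4 * α + 1) / (4 * (1 + 2 * α)) : ℝ)) : ℂ) * a2 ^ 2 := by
    push_cast
    field_simp
    ring
  have hr : (0:ℝ) ≤ (α ^ 2 + 4 * α + 1) / (4 * (1 + 2 * α)) := by positivity
  have htri : ((α ^ 2 + 4 * α + 1) / (4 * (1 + 2 * α))) * t ^ 2
      ≤ ‖(a3 - (1/2 : ℂ) * a2 ^ 2)‖
        + ‖(a3 - (((α ^ 2 + 8 * α + 3) / (4 * (1 + 2 * α))) : ℂ) * a2 ^ 2)‖ := by
    have h := norm_add_le (a3 - (1/2 : ℂ) * a2 ^ 2)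
      (-(a3 - (((α ^ 2 + 8 * α + 3) / (4 * (1 + 2 * α))) : ℂ) * a2 ^ 2))
    have he2 : (a3 - (1/2 : ℂ) * a2 ^ 2)
        + (-(a3 - (((α ^ 2 + 8 * α + 3) / (4 * (1 + 2 * α))) : ℂ) * a2 ^ 2))
        = ((((α ^ 2 + 4 * α + 1) / (4 * (1 + 2 * α)) : ℝ)) : ℂ) * a2 ^ 2 := by
      rw [heq]; ring
    rw [he2, norm_neg] at h
    calc ((α ^ 2 + 4 * α + 1) / (4 * (1 + 2 * α))) * t ^ 2
        = ‖(((((α ^ 2 + 4 * α + 1) / (4 * (1 + 2 * α)) : ℝ)) : ℂ) * a2 ^ 2)‖ := by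
          rw [norm_mul, norm_pow, Complex.norm_real, Real.norm_eq_abs, abs_of_nonneg hr]
      _ ≤ _ := h
  -- clear divisions
  set X := ‖(a3 - (1/2 : ℂ) * a2 ^ 2)‖ with hX
  set Y := ‖(a3 - (((α ^ 2 + 8 * α + 3) / (4 * (1 + 2 * α))) : ℂ) * a2 ^ 2)‖ with hY
  have e1 : 4 * (1 + 2 * α) * (1 / (1 + 2 * α) - (1 + α) ^ 2 / (4 * (1 + 2 * α)) * t ^ 2)
      = 4 - (1 + α) ^ 2 * t ^ 2 := by
    field_simp
  have h2b : 4 * (1 + 2 * α) * Y ≤ 4 - (1 + α) ^ 2 * t ^ 2 := by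
    rw [← e1]
    exact mul_le_mul_of_nonneg_left h2 (by positivity)
  have e2 : 4 * (1 + 2 * α) * ((α ^ 2 + 4 * α + 1) / (4 * (1 + 2 * α)) * t ^ 2)
      = (α ^ 2 + 4 * α + 1) * t ^ 2 := by
    field_simp
  have htri2 : (α ^ 2 + 4 * α + 1) * t ^ 2 ≤ 4 * (1 + 2 * α) * (X + Y) := by
    rw [← e2]
    exact mul_le_mul_of_nonneg_left htri (by positivity)
  have key2 : (α ^ 2 + 3 * α + 1) * t ^ 2 - 2 ≤ 2 * (1 + 2 * α) * X := by
    nlinarith [htri2, h2b]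
  have habs : ‖(a3 - (1 / 2) * a2 ^ 2)‖ = X := rfl
  have hX0 : 0 ≤ X := norm_nonneg _
  have hP : (0:ℝ) ≤ α ^ 2 + 3 * α + 1 := by positivity
  rw [ge_iff_le, neg_le, le_div_iff₀
    (by positivity : (0:ℝ) < 4 * (2 * α + 1) * (α ^ 2 + 3 * α + 1))]
  nlinarith [key2, sq_nonneg ((α ^ 2 + 3 * α + 1) * t - (2 * α + 1)), hP, hX0, hα1, ht0]
end

section
/- Let 0 ≤ α ≤ (1+√3)/2 and let t be real with √(2/(α²+3α+1)) ≤ t ≤ 2/(1+α). Then ((α²+3α+1)/(4(1+2α))) t² - (1/2)t - 1/(2(1+2α)) ≥ -1/√(2(α²+3α+1)). -/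
/-! With `A = α² + 3α + 1`, `c = 1 + 2α` and `s = √(2/A)` one has `A s² = 2` and `1/√(2A) = s/2`,
so `4c` times the difference of the two sides is `(t - s)(A(t + s) - 2c)`. For `t ≥ s` the second
factor is at least `2(As - c) = 2(√(2A) - c)`, which is nonnegative exactly when `c² ≤ 2A`, i.e.
`2α² - 2α - 1 ≤ 0`; this is where the bound `α ≤ (1 + √3)/2` enters. -/

open Real

lemma mul_sqrt_two_div_sq {A : ℝ} (hA : 0 < A) : A * √(2 / A) ^ 2 = 2 := by
  rw [sq_sqrt (by positivity)]
  field_simp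

lemma sqrt_two_mul_eq_mul_sqrt_two_div {A : ℝ} (hA : 0 ≤ A) : √(2 * A) = A * √(2 / A) := by
  rcases hA.eq_or_lt with rfl | hA
  · simp
  rw [← sqrt_sq hA.le, ← sqrt_mul (sq_nonneg A), sqrt_sq hA.le]
  congr 1
  field_simp

lemma one_div_sqrt_two_mul_eq_sqrt_two_div_div_two {A : ℝ} (hA : 0 < A) :
    1 / √(2 * A) = √(2 / A) / 2 := by
  rw [sqrt_two_mul_eq_mul_sqrt_two_div hA.le]
  field_simp
  linear_combination -mul_sqrt_two_div_sq hA

lemma neg_one_div_sqrt_two_mul_le {A c t : ℝ} (hA : 0 < A) (hc : 0 < c) (hcA : c ^ 2 ≤ 2 * A)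
    (ht : √(2 / A) ≤ t) :
    -(1 / √(2 * A)) ≤ A / (4 * c) * t ^ 2 - 1 / 2 * t - 1 / (2 * c) := by
  rw [one_div_sqrt_two_mul_eq_sqrt_two_div_div_two hA]
  have hs := mul_sqrt_two_div_sq hA
  have hcs : c ≤ A * √(2 / A) := by
    rw [← sqrt_two_mul_eq_mul_sqrt_two_div hA.le]
    exact le_sqrt_of_sq_le hcA
  set s := √(2 / A)
  have hfactor : A / (4 * c) * t ^ 2 - 1 / 2 * t - 1 / (2 * c) - -(s / 2)
      = (t - s) * (A * (t + s) - 2 * c) / (4 * c) := by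
    field_simp
    linear_combination 2 * hs
  have hsecond : 0 ≤ A * (t + s) - 2 * c := by
    nlinarith [mul_le_mul_of_nonneg_left ht hA.le]
  have := div_nonneg (mul_nonneg (sub_nonneg.2 ht) hsecond) (by positivity : (0 : ℝ) ≤ 4 * c)
  linarith

theorem stmt_10_general (α t : ℝ) (hα : 0 ≤ α) (hα2 : α ≤ (1 + Real.sqrt 3) / 2)
    (ht1 : Real.sqrt (2 / (α ^ 2 + 3 * α + 1)) ≤ t) :
    ((α ^ 2 + 3 * α + 1) / (4 * (1 + 2 * α))) * t ^ 2 - (1 / 2) * t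
      - 1 / (2 * (1 + 2 * α)) ≥ -(1 / Real.sqrt (2 * (α ^ 2 + 3 * α + 1))) := by
  have h3 : √3 ^ 2 = 3 := sq_sqrt (by norm_num)
  have h1 : 1 ≤ √3 := le_sqrt_of_sq_le (by norm_num)
  have hcA : (1 + 2 * α) ^ 2 ≤ 2 * (α ^ 2 + 3 * α + 1) := by
    nlinarith [mul_nonneg (by linarith : 0 ≤ √3 - (2 * α - 1)) (by linarith : 0 ≤ √3 + (2 * α - 1))]
  exact neg_one_div_sqrt_two_mul_le (by positivity) (by positivity) hcA ht1

theorem stmt_10 (α t : ℝ) (hα : 0 ≤ α) (hα2 : α ≤ (1 + Real.sqrt 3) / 2)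
    (ht1 : Real.sqrt (2 / (α ^ 2 + 3 * α + 1)) ≤ t) (ht2 : t ≤ 2 / (1 + α)) :
    ((α ^ 2 + 3 * α + 1) / (4 * (1 + 2 * α))) * t ^ 2 - (1 / 2) * t
      - 1 / (2 * (1 + 2 * α)) ≥ -(1 / Real.sqrt (2 * (α ^ 2 + 3 * α + 1))) :=
  stmt_10_general α t hα hα2 ht1
end

section
/- Let 0 < α ≤ 1 and let a2, a3 be complex numbers satisfying |a3 + (2(1-α)/(3α)) a2²| ≤ (α² - 4|a2|²)/(6α) and |a2| ≤ α/2. Then (1/2)|a3 - (1/2)a2²| - (1/2)|a2| ≤ α/12. -/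
/-! Writing `a₃ - a₂²/2 = (a₃ + c a₂²) - (c + 1/2) a₂²` with `c = 2(1-α)/(3α)`, the triangle
inequality and the hypothesis give `|a₃ - a₂²/2| ≤ (α - |a₂|²)/6`, since
`c + 1/2 = (4-α)/(6α) ≥ 0` and the `|a₂|²` terms combine to `-|a₂|²/6`. Halving, the bound
`α/12` follows even before subtracting `|a₂|/2`. -/

lemma norm_sub_mul_le_norm_add_mul {R : Type*} [NormedRing R] (c t x y : R) :
    ‖x - t * y‖ ≤ ‖x + c * y‖ + ‖c + t‖ * ‖y‖ :=
  calc ‖x - t * y‖ = ‖(x + c * y) - (c + t) * y‖ := by rw [add_mul]; abel_nf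
    _ ≤ ‖x + c * y‖ + ‖c + t‖ * ‖y‖ :=
      (norm_sub_le _ _).trans (add_le_add_right (norm_mul_le _ _) _)

lemma norm_sub_half_sq_le {α : ℝ} (hα : 0 < α) (hα4 : α ≤ 4) (a2 a3 : ℂ)
    (h : ‖a3 + ((2 * (1 - α) / (3 * α)) : ℂ) * a2 ^ 2‖ ≤ (α ^ 2 - 4 * ‖a2‖ ^ 2) / (6 * α)) :
    ‖a3 - 1 / 2 * a2 ^ 2‖ ≤ (α - ‖a2‖ ^ 2) / 6 := by
  have hcoef : ((2 * (1 - α) / (3 * α)) : ℂ) + 1 / 2 = (((4 - α) / (6 * α) : ℝ) : ℂ) := by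
    have : (α : ℂ) ≠ 0 := by exact_mod_cast hα.ne'
    push_cast
    field_simp
    ring
  have hnorm : ‖((2 * (1 - α) / (3 * α)) : ℂ) + 1 / 2‖ = (4 - α) / (6 * α) := by
    rw [hcoef, Complex.norm_real, Real.norm_of_nonneg (by positivity)]
  have hsum : (α ^ 2 - 4 * ‖a2‖ ^ 2) / (6 * α) + (4 - α) / (6 * α) * ‖a2‖ ^ 2
      = (α - ‖a2‖ ^ 2) / 6 := by
    field_simp
    ring
  calc ‖a3 - 1 / 2 * a2 ^ 2‖
      ≤ ‖a3 + ((2 * (1 - α) / (3 * α)) : ℂ) * a2 ^ 2‖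
        + ‖((2 * (1 - α) / (3 * α)) : ℂ) + 1 / 2‖ * ‖a2 ^ 2‖ :=
        norm_sub_mul_le_norm_add_mul _ _ _ _
    _ ≤ (α ^ 2 - 4 * ‖a2‖ ^ 2) / (6 * α) + (4 - α) / (6 * α) * ‖a2‖ ^ 2 := by
        rw [hnorm, norm_pow]
        gcongr
    _ = (α - ‖a2‖ ^ 2) / 6 := hsum

theorem stmt_13_general (α : ℝ) (hα : 0 < α) (hα1 : α ≤ 1) (a2 a3 : ℂ)
    (h1 : ‖a3 + ((2 * (1 - α) / (3 * α)) : ℂ) * a2 ^ 2‖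
      ≤ (α ^ 2 - 4 * ‖a2‖ ^ 2) / (6 * α)) :
    (1 / 2) * ‖a3 - (1 / 2) * a2 ^ 2‖ - (1 / 2) * ‖a2‖
      ≤ α / 12 := by
  have hbound := norm_sub_half_sq_le hα (by linarith) a2 a3 h1
  have hsq : 0 ≤ ‖a2‖ ^ 2 := by positivity
  linarith [norm_nonneg a2]

theorem stmt_13 (α : ℝ) (hα : 0 < α) (hα1 : α ≤ 1) (a2 a3 : ℂ)
    (h1 : ‖a3 + ((2 * (1 - α) / (3 * α)) : ℂ) * a2 ^ 2‖
      ≤ (α ^ 2 - 4 * ‖a2‖ ^ 2) / (6 * α))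
    (h2 : ‖a2‖ ≤ α / 2) :
    (1 / 2) * ‖a3 - (1 / 2) * a2 ^ 2‖ - (1 / 2) * ‖a2‖
      ≤ α / 12 :=
  stmt_13_general α hα hα1 a2 a3 h1
end

section
/- Let 0 < α ≤ 1 and let a2, a3 be complex numbers satisfying |a3 + (2(1-α)/(3α)) a2²| ≤ (α² - 4|a2|²)/(6α) and |a2| ≤ α/2. Then (1/2)|a3 - (1/2)a2²| - (1/2)|a2| ≥ -α(17-α)/(12(8-α)). -/
theorem stmt_14 (α : ℝ) (hα : 0 < α) (hα1 : α ≤ 1) (a2 a3 : ℂ)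
    (h1 : ‖a3 + ((2 * (1 - α) / (3 * α)) : ℂ) * a2 ^ 2‖
      ≤ (α ^ 2 - 4 * ‖a2‖ ^ 2) / (6 * α))
    (h2 : ‖a2‖ ≤ α / 2) :
    (1 / 2) * ‖a3 - (1 / 2) * a2 ^ 2‖ - (1 / 2) * ‖a2‖
      ≥ -(α * (17 - α) / (12 * (8 - α))) := by
  set x := ‖a2‖ with hxdef
  have hx0 : 0 ≤ x := norm_nonneg a2
  have hαne : (α : ℂ) ≠ 0 := by exact_mod_cast hα.ne'
  have h8 : (0:ℝ) < 8 - α := by linarith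
  have h3 : a3 - (1/2 : ℂ) * a2 ^ 2
      = (a3 + ((2 * (1 - α) / (3 * α)) : ℂ) * a2 ^ 2)
        - ((((4 - α)/(6*α)) : ℝ) : ℂ) * a2 ^ 2 := by
    push_cast
    field_simp
    ring
  have hd : (0:ℝ) ≤ (4 - α)/(6*α) := by
    apply div_nonneg <;> linarith
  have tri : ‖(((4 - α)/(6*α)) : ℝ) * a2 ^ 2‖
      - ‖a3 + ((2 * (1 - α) / (3 * α)) : ℂ) * a2 ^ 2‖
      ≤ ‖a3 - (1/2 : ℂ) * a2 ^ 2‖ := by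
    rw [h3]
    have := norm_sub_norm_le
      (((((4 - α)/(6*α)) : ℝ) : ℂ) * a2 ^ 2)
      (a3 + ((2 * (1 - α) / (3 * α)) : ℂ) * a2 ^ 2)
    rwa [norm_sub_rev] at this
  have habs : ‖(((4 - α)/(6*α)) : ℝ) * a2 ^ 2‖ = (4 - α)/(6*α) * x^2 := by
    rw [norm_mul, norm_pow, Complex.norm_of_nonneg hd]
  have key : (4 - α)/(6*α) * x^2 - (α ^ 2 - 4 * x ^ 2) / (6 * α)
      ≤ ‖a3 - (1/2 : ℂ) * a2 ^ 2‖ := by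
    rw [habs] at tri
    linarith
  have hid : (1/2) * ((4 - α)/(6*α) * x^2 - (α ^ 2 - 4 * x ^ 2) / (6 * α)) - (1/2) * x
      + α * (17 - α) / (12 * (8 - α)) = ((8 - α) * x - 3 * α)^2 / (12 * α * (8 - α)) := by
    field_simp
    ring
  have hpos : 0 ≤ ((8 - α) * x - 3 * α)^2 / (12 * α * (8 - α)) := by
    apply div_nonneg (sq_nonneg _)
    positivity
  have goal2 : (1/2 : ℂ) * a2 ^ 2 = ((1:ℂ)/2) * a2 ^ 2 := rfl
  have : -(α * (17 - α) / (12 * (8 - α)))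
      ≤ (1/2) * ‖a3 - (1/2 : ℂ) * a2 ^ 2‖ - (1/2) * x := by
    nlinarith [key, hid, hpos]
  exact this
end

section
/- Let a2, a3 be complex with |a3 - (3/4)a2²| ≤ 1 - (1/4)|a2|² and |a2| ≤ 2. Then -1/√2 ≤ (1/2)|a3 - (1/2)a2²| - (1/2)|a2| ≤ 1/2. -/
theorem stmt_18 (a2 a3 : ℂ)
    (h1 : ‖a3 - (3 / 4 : ℂ) * a2 ^ 2‖ ≤ 1 - (1 / 4) * ‖a2‖ ^ 2)
    (h2 : ‖a2‖ ≤ 2) :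
    -(1 / Real.sqrt 2) ≤ (1 / 2) * ‖a3 - (1 / 2) * a2 ^ 2‖
        - (1 / 2) * ‖a2‖ ∧
      (1 / 2) * ‖a3 - (1 / 2) * a2 ^ 2‖ - (1 / 2) * ‖a2‖ ≤ 1 / 2 := by
  set x := ‖a2‖ with hxdef
  set b := ‖a3 - (3 / 4 : ℂ) * a2 ^ 2‖ with hbdef
  set y := ‖a3 - (1 / 2 : ℂ) * a2 ^ 2‖ with hydef
  have hx0 : 0 ≤ x := norm_nonneg _
  have hy0 : 0 ≤ y := norm_nonneg _
  have habs : ‖(1 / 4 : ℂ) * a2 ^ 2‖ = (1 / 4) * x ^ 2 := by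
    simp [map_mul, map_pow, hxdef]
  have htri1 : y ≤ b + (1 / 4) * x ^ 2 := by
    have h : a3 - (1 / 2 : ℂ) * a2 ^ 2
        = (a3 - (3 / 4 : ℂ) * a2 ^ 2) + (1 / 4 : ℂ) * a2 ^ 2 := by ring
    calc y = ‖(a3 - (3 / 4 : ℂ) * a2 ^ 2) + (1 / 4 : ℂ) * a2 ^ 2‖ := by rw [hydef, h]
    _ ≤ b + (1 / 4) * x ^ 2 := by
        have t := norm_add_le (a3 - (3 / 4 : ℂ) * a2 ^ 2) ((1 / 4 : ℂ) * a2 ^ 2)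
        rw [habs] at t
        exact t
  have htri2 : (1 / 4) * x ^ 2 ≤ y + b := by
    have h : (1 / 4 : ℂ) * a2 ^ 2
        = (a3 - (1 / 2 : ℂ) * a2 ^ 2) - (a3 - (3 / 4 : ℂ) * a2 ^ 2) := by ring
    calc (1 / 4) * x ^ 2 = ‖(a3 - (1 / 2 : ℂ) * a2 ^ 2) - (a3 - (3 / 4 : ℂ) * a2 ^ 2)‖ := by
          rw [← habs, h]
    _ ≤ y + b := norm_sub_le _ _
  have hs0 : (0:ℝ) < Real.sqrt 2 := Real.sqrt_pos.mpr (by norm_num)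
  have hs2 : Real.sqrt 2 ^ 2 = 2 := Real.sq_sqrt (by norm_num)
  have hs1 : (1:ℝ) ≤ Real.sqrt 2 := by nlinarith
  constructor
  · have hinv : (1:ℝ) / Real.sqrt 2 = Real.sqrt 2 / 2 := by
      rw [eq_div_iff (by norm_num : (2:ℝ) ≠ 0), one_div, inv_mul_eq_div,
        div_eq_iff (ne_of_gt hs0)]
      nlinarith
    rw [hinv]
    rcases le_or_gt x (Real.sqrt 2) with h | h
    · nlinarith
    · nlinarith [mul_nonneg (le_of_lt (sub_pos.mpr h)) (by nlinarith : (0:ℝ) ≤ x - (2 - Real.sqrt 2))]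
  · nlinarith
end

section
/- Let a2, a3 be complex with |a3 - a2²| ≤ (1/3)(1 - |a2|²) and |a2| ≤ 1. Then -1/√10 ≤ (1/2)|a3 - (1/2)a2²| - (1/2)|a2| ≤ 1/6. -/
theorem stmt_19 (a2 a3 : ℂ)
    (h1 : ‖a3 - a2 ^ 2‖ ≤ (1 / 3) * (1 - ‖a2‖ ^ 2))
    (h2 : ‖a2‖ ≤ 1) :
    -(1 / Real.sqrt 10) ≤ (1 / 2) * ‖a3 - (1 / 2) * a2 ^ 2‖
        - (1 / 2) * ‖a2‖ ∧
      (1 / 2) * ‖a3 - (1 / 2) * a2 ^ 2‖ - (1 / 2) * ‖a2‖ ≤ 1 / 6 := by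
  set x := ‖a2‖ with hx
  set t := ‖a3 - a2 ^ 2‖ with ht
  set y := ‖a3 - (1 / 2) * a2 ^ 2‖ with hy
  have hx0 : 0 ≤ x := norm_nonneg _
  have ht0 : 0 ≤ t := norm_nonneg _
  have hy0 : 0 ≤ y := norm_nonneg _
  have hsq : ‖(1 / 2 : ℂ) * a2 ^ 2‖ = x ^ 2 / 2 := by
    rw [norm_mul, norm_pow, ← hx]
    simp
    ring
  have htri1 : y ≤ t + x ^ 2 / 2 := by
    calc y = ‖(a3 - a2 ^ 2) + (1 / 2) * a2 ^ 2‖ := by rw [hy]; ring_nf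
    _ ≤ t + ‖(1 / 2 : ℂ) * a2 ^ 2‖ := norm_add_le _ _
    _ = t + x ^ 2 / 2 := by rw [hsq]
  have htri2 : x ^ 2 / 2 ≤ y + t := by
    calc x ^ 2 / 2 = ‖(a3 - (1 / 2) * a2 ^ 2) - (a3 - a2 ^ 2)‖ := by
          rw [← hsq]; ring_nf
    _ ≤ y + t := norm_sub_le _ _
  -- now pure real arithmetic
  have hs0 : (0:ℝ) < Real.sqrt 10 := Real.sqrt_pos.mpr (by norm_num)
  have hs : (Real.sqrt 10) ^ 2 = 10 := Real.sq_sqrt (by norm_num)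
  set s := Real.sqrt 10 with hsdef
  have hs3 : 3 < s := by nlinarith
  constructor
  · have key : (x / 2 - y / 2) * s ≤ 1 := by
      rcases le_or_gt (x * s) 2 with hcase | hcase
      · nlinarith [mul_nonneg hy0 hs0.le]
      · have hylb : (5 * x ^ 2 - 2) / 6 ≤ y := by nlinarith
        have h5x : s ≤ 5 * x := by nlinarith
        nlinarith [mul_nonneg (by linarith : (0:ℝ) ≤ x * s - 2)
            (by linarith : (0:ℝ) ≤ 5 * x + s - 6),
          mul_le_mul_of_nonneg_right hylb hs0.le]
    have h1s : (0:ℝ) < 1 / s := by positivity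
    have hss : s * (1 / s) = 1 := by field_simp
    nlinarith [mul_le_mul_of_nonneg_right key h1s.le]
  · nlinarith
end
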